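/- Let g(t) = ∑_{k≥0} a_k P_k^1(t) generate a continuous isotropic positive definite kernel on S¹ (a_k ≥ 0, ∑ a_k P_k^1(1) < ∞). The kernel (x,y) ↦ g(x·y) is strictly positive definite if and only if for every n and all distinct x₁,…,xₙ ∈ S¹ with polar angles θ₁,…,θₙ, the only real vector c with ∑_μ c_μ e^{i k θ_μ} = 0 for all k with a_k > 0 is c = 0. -/

import Mathlib

open scoped BigOperators Real
open Real Filter

noncomputable section

/-- Gegenbauer polynomial `P_l^m` attached to the parameter `(m-1)/2`,
normalized so that `geg m l 1 = binomial (l+m-2) l` (for `m ≥ 2`). -/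
def geg (m : ℕ) : ℕ → ℝ → ℝ
  | 0, _ => 1
  | 1, t => ((m : ℝ) - 1) * t
  | (n + 2), t =>
      ((2 * (n : ℝ) + (m : ℝ) + 1) * t * geg m (n + 1) t
        - ((n : ℝ) + (m : ℝ) - 1) * geg m n t) / ((n : ℝ) + 2)

/-- Gegenbauer polynomial for `m = 1`: `P_0^1 ≡ 1`, `P_k^1 (cos θ) = (2/k) cos (kθ)`. -/
def geg1 (k : ℕ) (t : ℝ) : ℝ :=
  if k = 0 then 1 else (2 / (k : ℝ)) * Real.cos ((k : ℝ) * Real.arccos t)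

/-- The unit sphere `S^m ⊆ ℝ^{m+1}`. -/
abbrev Sph (m : ℕ) :=
  (Metric.sphere (0 : EuclideanSpace ℝ (Fin (m + 1))) 1 : Set (EuclideanSpace ℝ (Fin (m + 1))))

/-- The dot product of two points of `S^m`. -/
def dotS {m : ℕ} (x y : Sph m) : ℝ :=
  inner ℝ (x : EuclideanSpace ℝ (Fin (m + 1))) (y : EuclideanSpace ℝ (Fin (m + 1)))

/-!
Since `P_k^1(cos θ) = P_k^1(1) cos kθ` and `∑ᵢ∑ⱼ cᵢ cⱼ cos k(θᵢ - θⱼ) = |∑_μ c_μ e^{ikθ_μ}|²`,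
the quadratic form of the kernel at `c` is the series `∑_k a_k P_k^1(1) |∑_μ c_μ e^{ikθ_μ}|²`
of nonnegative terms. It vanishes exactly when every term with `a_k > 0` does, so positivity
of the form for `c ≠ 0` is the same as the stated uniqueness condition.
-/

lemma geg1_one_pos (k : ℕ) : 0 < geg1 k 1 := by
  rcases eq_or_ne k 0 with rfl | hk
  · simp [geg1]
  · simp only [geg1, hk, if_false, arccos_one, mul_zero, cos_zero, mul_one]
    positivity

lemma geg1_cos (k : ℕ) (x : ℝ) : geg1 k (cos x) = geg1 k 1 * cos (k * x) := by
  rcases eq_or_ne k 0 with rfl | hk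
  · simp [geg1]
  · have hT := Polynomial.Chebyshev.T_real_cos (arccos (cos x)) k
    rw [cos_arccos (neg_one_le_cos x) (cos_le_one x), Polynomial.Chebyshev.T_real_cos] at hT
    simp only [geg1, hk, if_false, arccos_one, mul_zero, cos_zero, mul_one]
    exact_mod_cast congrArg (2 / (k : ℝ) * ·) hT.symm

lemma abs_geg1_cos_le (k : ℕ) (x : ℝ) : |geg1 k (cos x)| ≤ geg1 k 1 := by
  rw [geg1_cos, abs_mul, abs_of_pos (geg1_one_pos k)]
  exact mul_le_of_le_one_right (geg1_one_pos k).le (abs_cos_le_one _)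

lemma hasSum_geg1_cos {a : ℕ → ℝ} (ha : ∀ k, 0 ≤ a k)
    (hsum : Summable fun k => a k * geg1 k 1) (x : ℝ) :
    HasSum (fun k => a k * geg1 k (cos x)) (∑' k, a k * geg1 k (cos x)) := by
  refine (Summable.of_norm_bounded hsum fun k => ?_).hasSum
  rw [Real.norm_eq_abs, abs_mul, abs_of_nonneg (ha k)]
  exact mul_le_mul_of_nonneg_left (abs_geg1_cos_le k x) (ha k)

section QuadraticForm

variable {ι : Type*} [Fintype ι]

lemma sum_sum_mul_cos_sub_eq_normSq (c φ : ι → ℝ) :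
    ∑ i, ∑ j, c i * c j * cos (φ i - φ j) =
      Complex.normSq (∑ μ, (c μ : ℂ) * Complex.exp (φ μ * Complex.I)) := by
  simp only [Complex.normSq_apply, Complex.re_sum, Complex.im_sum, Complex.re_ofReal_mul,
    Complex.im_ofReal_mul, Complex.exp_ofReal_mul_I_re, Complex.exp_ofReal_mul_I_im,
    Finset.sum_mul_sum, ← Finset.sum_add_distrib, cos_sub]
  exact Finset.sum_congr rfl fun i _ => Finset.sum_congr rfl fun j _ => by ring

def expSum (c θ : ι → ℝ) (k : ℕ) : ℂ :=
  ∑ μ, (c μ : ℂ) * Complex.exp (Complex.I * (k : ℂ) * ((θ μ : ℝ) : ℂ))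

lemma sum_sum_mul_geg1_cos_sub (c θ : ι → ℝ) (k : ℕ) :
    ∑ i, ∑ j, c i * c j * geg1 k (cos (θ i - θ j)) =
      geg1 k 1 * Complex.normSq (expSum c θ k) := by
  have hφ : expSum c θ k =
      ∑ μ, (c μ : ℂ) * Complex.exp (((k * θ μ : ℝ) : ℂ) * Complex.I) := by
    refine Finset.sum_congr rfl fun μ _ => ?_
    push_cast
    ring_nf
  simp only [hφ, ← sum_sum_mul_cos_sub_eq_normSq, geg1_cos, mul_sub, Finset.mul_sum]
  exact Finset.sum_congr rfl fun i _ => Finset.sum_congr rfl fun j _ => by ring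

variable {a : ℕ → ℝ} (ha : ∀ k, 0 ≤ a k)
include ha

lemma mul_geg1_one_mul_normSq_nonneg (k : ℕ) (z : ℂ) :
    0 ≤ a k * (geg1 k 1 * Complex.normSq z) :=
  mul_nonneg (ha k) (mul_nonneg (geg1_one_pos k).le (Complex.normSq_nonneg z))

variable (hsum : Summable fun k => a k * geg1 k 1)
include hsum

lemma hasSum_quadForm (c θ : ι → ℝ) :
    HasSum (fun k => a k * (geg1 k 1 * Complex.normSq (expSum c θ k)))
      (∑ i, ∑ j, c i * c j * ∑' k, a k * geg1 k (cos (θ i - θ j))) := by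
  simp only [← sum_sum_mul_geg1_cos_sub, Finset.mul_sum]
  refine hasSum_sum fun i _ => hasSum_sum fun j _ => ?_
  simpa only [mul_left_comm] using (hasSum_geg1_cos ha hsum (θ i - θ j)).mul_left (c i * c j)

lemma quadForm_nonneg (c θ : ι → ℝ) :
    0 ≤ ∑ i, ∑ j, c i * c j * ∑' k, a k * geg1 k (cos (θ i - θ j)) :=
  (hasSum_quadForm ha hsum c θ).nonneg fun k => mul_geg1_one_mul_normSq_nonneg ha k _

lemma quadForm_eq_zero_iff (c θ : ι → ℝ) :
    ∑ i, ∑ j, c i * c j * ∑' k, a k * geg1 k (cos (θ i - θ j)) = 0 ↔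
      ∀ k, 0 < a k → expSum c θ k = 0 := by
  have hQ := hasSum_quadForm ha hsum c θ
  calc _ ↔ HasSum (fun k => a k * (geg1 k 1 * Complex.normSq (expSum c θ k))) 0 :=
        ⟨fun h : _ = 0 => h ▸ hQ, hQ.unique⟩
    _ ↔ ∀ k, a k * (geg1 k 1 * Complex.normSq (expSum c θ k)) = 0 := by
        rw [hasSum_zero_iff_of_nonneg fun k => mul_geg1_one_mul_normSq_nonneg ha k _, funext_iff]
        rfl
    _ ↔ ∀ k, 0 < a k → expSum c θ k = 0 := forall_congr' fun k => by
        rw [(ha k).lt_iff_ne', ← or_iff_not_imp_left, eq_comm]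
        simp [(geg1_one_pos k).ne']

end QuadraticForm

/-- Lemma 2.3: the continuous isotropic positive definite kernel generated on `S¹` by
`g(t) = ∑_k a_k P_k^1(t)` is strictly positive definite iff for all distinct points of
`S¹` with polar angles `θ₁,…,θₙ ∈ [0,2π)`, the only real vector `c` with
`∑_μ c_μ e^{ikθ_μ} = 0` for all `k` with `a_k > 0` is `c = 0`. -/
theorem stmt12 (a : ℕ → ℝ) (ha : ∀ k, 0 ≤ a k)
    (hsum : Summable fun k => a k * geg1 k 1)
    (g : ℝ → ℝ) (hg : ∀ t, g t = ∑' k, a k * geg1 k t) :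
    (∀ (n : ℕ) (θ : Fin n → ℝ), (∀ μ, θ μ ∈ Set.Ico (0 : ℝ) (2 * Real.pi)) →
      Function.Injective θ →
      ∀ c : Fin n → ℝ, c ≠ 0 → 0 < ∑ i, ∑ j, c i * c j * g (Real.cos (θ i - θ j))) ↔
    (∀ (n : ℕ) (θ : Fin n → ℝ), (∀ μ, θ μ ∈ Set.Ico (0 : ℝ) (2 * Real.pi)) →
      Function.Injective θ →
      ∀ c : Fin n → ℝ,
        (∀ k : ℕ, 0 < a k →
          ∑ μ, (c μ : ℂ) * Complex.exp (Complex.I * (k : ℂ) * ((θ μ : ℝ) : ℂ)) = 0) →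
        c = 0) := by
  obtain rfl : g = fun t => ∑' k, a k * geg1 k t := funext hg
  refine forall₂_congr fun n θ => forall₂_congr fun _ _ => forall_congr' fun c => ?_
  change _ ↔ ((∀ k, 0 < a k → expSum c θ k = 0) → c = 0)
  rw [(quadForm_nonneg ha hsum c θ).lt_iff_ne', ← quadForm_eq_zero_iff ha hsum]
  exact not_imp_not
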